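/- arXiv:1503.02998 — 2 statements merged into one kernel-verified Lean document; each statement's English description precedes it below -/
import Mathlib

section
/- Let H₁, H₂ be Hilbert spaces and S : H₁ → H₂ a bounded operator whose kernel is finite-dimensional. If there is a closed subspace L ⊆ range(S) with dim L^⊥ < ∞, then there exists λ > 0 such that the spectral projection of S*S onto [0,λ] has finite-dimensional range. -/
open scoped InnerProductSpace

/-- `P` is (a projection with the characteristic properties of) the spectral projection of the
self-adjoint operator `A` onto the interval `(-∞, l]` (equal to `[0, l]` for positive `A`). -/
def IsSpectralProjLE {H : Type*} [NormedAddCommGroup H] [InnerProductSpace ℂ H] [CompleteSpace H]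
    (A P : H →L[ℂ] H) (l : ℝ) : Prop :=
  IsSelfAdjoint P ∧ P ∘L P = P ∧ A ∘L P = P ∘L A ∧
    (∀ u : H, P u = u → (⟪A u, u⟫_ℂ).re ≤ l * ‖u‖ ^ 2) ∧
    (∀ u : H, P u = 0 → l * ‖u‖ ^ 2 ≤ (⟪A u, u⟫_ℂ).re)

set_option maxHeartbeats 1000000 in
/-- If `S : H₁ → H₂` is bounded with finite-dimensional kernel, and there is a closed subspace
`L ⊆ range S` with `dim Lᗮ < ∞`, then there exists `λ > 0` such that the spectral projection
of `S*S` onto `[0, λ]` has finite-dimensional range. -/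
theorem stmt3 {H₁ H₂ : Type*}
    [NormedAddCommGroup H₁] [InnerProductSpace ℂ H₁] [CompleteSpace H₁]
    [NormedAddCommGroup H₂] [InnerProductSpace ℂ H₂] [CompleteSpace H₂]
    (S : H₁ →L[ℂ] H₂)
    (hker : FiniteDimensional ℂ (LinearMap.ker (S : H₁ →ₗ[ℂ] H₂)))
    (L : Submodule ℂ H₂) (hLclosed : IsClosed (L : Set H₂))
    (hLrange : L ≤ LinearMap.range (S : H₁ →ₗ[ℂ] H₂))
    (hLperp : FiniteDimensional ℂ Lᗮ) :
    ∃ l : ℝ, 0 < l ∧ ∀ P : H₁ →L[ℂ] H₁,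
      IsSpectralProjLE ((ContinuousLinearMap.adjoint S) ∘L S) P l →
        FiniteDimensional ℂ (LinearMap.range (P : H₁ →ₗ[ℂ] H₁)) := by
  classical
  set K : Submodule ℂ H₁ := LinearMap.ker (S : H₁ →ₗ[ℂ] H₂) with hK
  haveI : CompleteSpace K := FiniteDimensional.complete ℂ K
  haveI : CompleteSpace L := hLclosed.completeSpace_coe
  set B : Submodule ℂ H₁ := L.comap (S : H₁ →ₗ[ℂ] H₂) with hB
  have hBclosed : IsClosed (B : Set H₁) := hLclosed.preimage S.continuous
  set M : Submodule ℂ H₁ := Kᗮ ⊓ B with hM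
  have hMclosed : IsClosed (M : Set H₁) :=
    (Submodule.isClosed_orthogonal K).inter hBclosed
  haveI : CompleteSpace M := hMclosed.completeSpace_coe
  -- H₂ ⧸ L finite dimensional
  haveI : FiniteDimensional ℂ (H₂ ⧸ L) :=
    FiniteDimensional.of_injective
      ((Submodule.quotientEquivOfIsCompl L Lᗮ
        (Submodule.isCompl_orthogonal_of_hasOrthogonalProjection)).toLinearMap)
      (LinearEquiv.injective _)
  -- H₁ ⧸ B finite dimensional: injects into H₂ ⧸ L via S
  haveI : FiniteDimensional ℂ (H₁ ⧸ B) := by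
    refine FiniteDimensional.of_injective
      (B.liftQ (L.mkQ.comp (S : H₁ →ₗ[ℂ] H₂)) ?_) ?_
    · intro x hx
      simpa [hB, Submodule.Quotient.mk_eq_zero] using hx
    · rw [← LinearMap.ker_eq_bot]
      apply Submodule.ker_liftQ_eq_bot
      intro x hx
      simpa [hB, Submodule.Quotient.mk_eq_zero] using hx
  -- H₁ ⧸ Kᗮ finite dimensional
  haveI : FiniteDimensional ℂ (H₁ ⧸ Kᗮ) :=
    FiniteDimensional.of_injective
      ((Submodule.quotientEquivOfIsCompl Kᗮ K
        (Submodule.isCompl_orthogonal_of_hasOrthogonalProjection).symm).toLinearMap)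
      (LinearEquiv.injective _)
  -- H₁ ⧸ M finite dimensional
  haveI : FiniteDimensional ℂ (H₁ ⧸ M) := by
    refine FiniteDimensional.of_injective
      (M.liftQ (LinearMap.prod Kᗮ.mkQ B.mkQ) ?_) ?_
    · intro x hx
      simp only [LinearMap.mem_ker, LinearMap.prod_apply, Prod.zero_eq_mk, Pi.prod, Function.prod,
        Prod.mk.injEq, Submodule.mkQ_apply, Submodule.Quotient.mk_eq_zero]
      exact ⟨hx.1, hx.2⟩
    · rw [← LinearMap.ker_eq_bot]
      apply Submodule.ker_liftQ_eq_bot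
      intro x hx
      simp only [LinearMap.mem_ker, LinearMap.prod_apply, Prod.zero_eq_mk, Pi.prod, Function.prod,
        Prod.mk.injEq, Submodule.mkQ_apply, Submodule.Quotient.mk_eq_zero] at hx
      exact ⟨hx.1, hx.2⟩
  -- Mᗮ finite dimensional
  haveI hMperp : FiniteDimensional ℂ Mᗮ := by
    refine FiniteDimensional.of_injective (M.mkQ.comp Mᗮ.subtype) ?_
    intro x y hxy
    have hd : M.mkQ ((x : H₁) - y) = 0 := by
      rw [map_sub, sub_eq_zero]; exact hxy
    have hdM : ((x : H₁) - y) ∈ M := (Submodule.Quotient.mk_eq_zero M).mp hd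
    have h0 : ((x : H₁) - y) ∈ M ⊓ Mᗮ := ⟨hdM, Mᗮ.sub_mem x.2 y.2⟩
    rw [Submodule.inf_orthogonal_eq_bot, Submodule.mem_bot] at h0
    exact Subtype.ext (sub_eq_zero.mp h0)
  -- S restricted to M is a bijection onto L
  have hmemL : ∀ x : M, S x ∈ L := fun x => x.2.2
  set T : M →L[ℂ] L :=
    (S.comp (Submodule.subtypeL M)).codRestrict L (fun x => hmemL x) with hT
  have hTinj : LinearMap.ker (T : M →ₗ[ℂ] L) = ⊥ := by
    rw [LinearMap.ker_eq_bot]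
    intro x y hxy
    have hx : S x = S y := congrArg Subtype.val hxy
    have : (x : H₁) - y ∈ K ⊓ Kᗮ := by
      constructor
      · simp [hK, LinearMap.mem_ker, map_sub, hx]
      · exact Kᗮ.sub_mem x.2.1 y.2.1
    rw [Submodule.inf_orthogonal_eq_bot K, Submodule.mem_bot] at this
    exact Subtype.ext (sub_eq_zero.mp this)
  have hTsurj : LinearMap.range (T : M →ₗ[ℂ] L) = ⊤ := by
    rw [LinearMap.range_eq_top]
    rintro ⟨y, hy⟩
    obtain ⟨x, hx⟩ := hLrange hy
    obtain ⟨m, hmmem, k, hkmem, hmk⟩ :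
        ∃ m ∈ Kᗮ, ∃ k ∈ Kᗮᗮ, x = m + k := by
      have := Submodule.exists_add_mem_mem_orthogonal (K := Kᗮ) x
      obtain ⟨m, hm, k, hk, h⟩ := this
      exact ⟨m, hm, k, hk, h⟩
    have hkK : k ∈ K := (K.orthogonal_orthogonal) ▸ hkmem
    have hSm : S m = y := by
      have : S x = S m + S k := by rw [hmk, map_add]
      have hSk : S k = 0 := hkK
      rw [show S x = y from hx] at this; rw [this, hSk, add_zero]
    refine ⟨⟨m, hmmem, ?_⟩, ?_⟩
    · show S m ∈ L; rw [hSm]; exact hy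
    · exact Subtype.ext hSm
  set e := ContinuousLinearEquiv.ofBijective T hTinj hTsurj with he
  -- lower bound
  obtain ⟨C, hCpos, hC⟩ : ∃ C : ℝ, 0 < C ∧ ∀ x : M, ‖(x : H₁)‖ ≤ C * ‖S x‖ := by
    obtain ⟨C, hCpos, hC⟩ := e.symm.toContinuousLinearMap.bound
    refine ⟨C, hCpos, fun x => ?_⟩
    have := hC (e x)
    simp [he, hT] at this
    exact this
  refine ⟨1 / (2 * C ^ 2), by positivity, fun P hP => ?_⟩
  obtain ⟨hPsa, hPP, hPA, hPle, _⟩ := hP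
  -- range P injects into Mᗮ
  refine FiniteDimensional.of_injective
    (((Submodule.orthogonalProjection Mᗮ).toLinearMap.comp (LinearMap.range (P : H₁ →ₗ[ℂ] H₁)).subtype)) ?_
  intro u v huv
  have hu' : Submodule.orthogonalProjection Mᗮ ((u : H₁) - v) = 0 := by
    rw [map_sub, sub_eq_zero]; exact huv
  set w : H₁ := (u : H₁) - v with hw
  have huM : w ∈ M := by
    have : w ∈ Mᗮᗮ := Submodule.orthogonalProjectionOnto_eq_zero_iff.mp hu'
    rwa [Submodule.orthogonal_orthogonal] at this
  have hwP : w ∈ LinearMap.range (P : H₁ →ₗ[ℂ] H₁) := (LinearMap.range (P : H₁ →ₗ[ℂ] H₁)).sub_mem u.2 v.2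
  have hPu : P w = w := by
    obtain ⟨z, hz⟩ := hwP
    calc P w = (P ∘L P) z := by rw [ContinuousLinearMap.comp_apply, show P z = w from hz]
    _ = P z := by rw [hPP]
    _ = w := hz
  have hineq := hPle w hPu
  have hinner : (⟪((ContinuousLinearMap.adjoint S) ∘L S) w, w⟫_ℂ).re
      = ‖S w‖ ^ 2 := by
    rw [ContinuousLinearMap.comp_apply, ContinuousLinearMap.adjoint_inner_left,
      inner_self_eq_norm_sq_to_K]
    norm_cast
  rw [hinner] at hineq
  have hlow : ‖w‖ ≤ C * ‖S w‖ := hC ⟨w, huM⟩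
  have hu0 : w = 0 := by
    by_contra h
    have hn : 0 < ‖w‖ := norm_pos_iff.mpr h
    have hn2 : 0 < ‖w‖ ^ 2 := by positivity
    have h1 : ‖w‖ ^ 2 ≤ C ^ 2 * ‖S w‖ ^ 2 := by
      calc ‖w‖ ^ 2 ≤ (C * ‖S w‖) ^ 2 := by
            apply pow_le_pow_left₀ (norm_nonneg _) hlow
      _ = C ^ 2 * ‖S w‖ ^ 2 := by ring
    have h2 : ‖S w‖ ^ 2 ≤ 1 / (2 * C ^ 2) * ‖w‖ ^ 2 := hineq
    have h3 : ‖w‖ ^ 2 ≤ 1 / 2 * ‖w‖ ^ 2 := by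
      calc ‖w‖ ^ 2 ≤ C ^ 2 * ‖S w‖ ^ 2 := h1
      _ ≤ C ^ 2 * (1 / (2 * C ^ 2) * ‖w‖ ^ 2) := by
            apply mul_le_mul_of_nonneg_left h2 (by positivity)
      _ = 1 / 2 * ‖w‖ ^ 2 := by field_simp
    linarith
  exact Subtype.ext (sub_eq_zero.mp hu0)
end

section
/- Let H be a Hilbert space and T a (possibly unbounded) closed densely defined operator from H to H. Then for the bounded transform Φ(T) := T(I + T*T)^{-1/2}, the operator Φ(T)*Φ(T) equals T*T(I + T*T)^{-1} = f(T*T) where f(x) = x/(1+x); consequently for every λ ≥ 0, the spectral projection of T*T onto [0,λ] equals the spectral projection of Φ(T)*Φ(T) onto [0, λ/(1+λ)]. -/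
open scoped InnerProductSpace

/-- `P` has the characteristic properties of the spectral projection of the bounded
self-adjoint operator `A` onto `[l, ∞)`. -/
def IsSpectralProjGE {H : Type*} [NormedAddCommGroup H] [InnerProductSpace ℂ H] [CompleteSpace H]
    (A P : H →L[ℂ] H) (l : ℝ) : Prop :=
  IsSelfAdjoint P ∧ P ∘L P = P ∧ A ∘L P = P ∘L A ∧
    (∀ u : H, P u = u → l * ‖u‖ ^ 2 ≤ (⟪A u, u⟫_ℂ).re) ∧
    (∀ u : H, P u = 0 → (⟪A u, u⟫_ℂ).re ≤ l * ‖u‖ ^ 2)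

/-- Bounded transform.  Let `T` be a closed densely defined operator on a Hilbert space `H`.
The operator `R` is `(I + T*T)^{-1/2}`, encoded by: `R` is self-adjoint, positive, its range
lies in `Dom T`, and `Q := R² = (I + T*T)^{-1}` satisfies the weak resolvent identity
`⟪Qx, y⟫ + ⟪T(Qx), Ty⟫ = ⟪x, y⟫` for all `x` and all `y ∈ Dom T` (these properties determine
`R` uniquely).  `Φ = T ∘ R` is the bounded transform `Φ(T) = T(I + T*T)^{-1/2}`.  Then
`Φ*Φ = T*T (I + T*T)^{-1} = f(T*T) = I − (I + T*T)^{-1}` with `f(x) = x/(1+x)`, and for every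
`λ ≥ 0` the spectral projection of `T*T` onto `[0, λ]` — i.e. the spectral projection of
`(I + T*T)^{-1}` onto `[1/(1+λ), 1]` — coincides with the spectral projection of `Φ*Φ` onto
`[0, λ/(1+λ)]`. -/
theorem stmt5 {H : Type*} [NormedAddCommGroup H] [InnerProductSpace ℂ H] [CompleteSpace H]
    (T : H →ₗ.[ℂ] H) (hdense : Dense (T.domain : Set H)) (hclosed : T.IsClosed)
    (R : H →L[ℂ] H) (hRsa : IsSelfAdjoint R) (hRpos : ∀ x : H, 0 ≤ (⟪R x, x⟫_ℂ).re)
    (hRdom : ∀ x : H, R x ∈ T.domain)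
    (hres : ∀ (x : H) (y : T.domain),
      ⟪R (R x), (y : H)⟫_ℂ + ⟪T ⟨R (R x), hRdom (R x)⟩, T y⟫_ℂ = ⟪x, (y : H)⟫_ℂ)
    (Φ : H →L[ℂ] H) (hΦ : ∀ x : H, Φ x = T ⟨R x, hRdom x⟩) :
    (ContinuousLinearMap.adjoint Φ) ∘L Φ = 1 - (R ∘L R) ∧
    ∀ lam : ℝ, 0 ≤ lam → ∀ P : H →L[ℂ] H,
      (IsSpectralProjGE (R ∘L R) P (1 + lam)⁻¹ ↔
        IsSpectralProjLE ((ContinuousLinearMap.adjoint Φ) ∘L Φ) P (lam / (1 + lam))) := by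
  open ContinuousLinearMap in
  have main : (ContinuousLinearMap.adjoint Φ) ∘L Φ = 1 - (R ∘L R) := by
    have hR : ∀ x y : H, ⟪R x, y⟫_ℂ = ⟪x, R y⟫_ℂ := by
      intro x y
      conv_lhs => rw [← hRsa.adjoint_eq]
      exact adjoint_inner_left R y x
    have hinj : ∀ x : H, R x = 0 → x = 0 := by
      intro x hx
      have h0 : ∀ y : H, ⟪x, y⟫_ℂ = 0 := by
        have heq : Set.EqOn (fun y : H => ⟪x, y⟫_ℂ) (fun _ => 0) (T.domain : Set H) := by
          intro y hy
          have := hres x ⟨y, hy⟩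
          have hz : (⟨R (R x), hRdom (R x)⟩ : T.domain) = 0 := by
            ext; simp [hx]
          rw [hz, T.map_zero, hx, map_zero] at this
          simpa using this.symm
        have : (fun y : H => ⟪x, y⟫_ℂ) = fun _ => 0 :=
          Continuous.ext_on hdense (continuous_const.inner continuous_id) continuous_const heq
        exact fun y => congrFun this y
      have := h0 x
      rwa [inner_self_eq_zero] at this
    have key : ∀ x : H, (ContinuousLinearMap.adjoint Φ ∘L Φ) (R x) = (1 - R ∘L R) (R x) := by
      intro x
      apply ext_inner_right ℂ
      intro y
      have h1 : ⟪(ContinuousLinearMap.adjoint Φ ∘L Φ) (R x), y⟫_ℂ = ⟪Φ (R x), Φ y⟫_ℂ := by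
        simp only [comp_apply]
        rw [← adjoint_inner_left Φ]
      have h2 := hres x ⟨R y, hRdom y⟩
      rw [h1, hΦ (R x), hΦ y]
      have : ⟪T ⟨R (R x), hRdom (R x)⟩, T ⟨R y, hRdom y⟩⟫_ℂ
          = ⟪x, R y⟫_ℂ - ⟪R (R x), R y⟫_ℂ := by
        rw [← h2]; ring
      rw [this]
      simp only [one_apply, comp_apply, sub_apply, inner_sub_left]
      rw [show (1 : H →L[ℂ] H) (R x) = R x from rfl, hR x y, ← hR (R (R x)) y]
    have hsa : IsSelfAdjoint (ContinuousLinearMap.adjoint Φ ∘L Φ - (1 - R ∘L R)) := by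
      apply IsSelfAdjoint.sub
      · rw [IsSelfAdjoint, star_eq_adjoint, adjoint_comp, adjoint_adjoint]
      · rw [IsSelfAdjoint, star_sub, star_one, star_eq_adjoint, adjoint_comp, hRsa.adjoint_eq]
    set A := ContinuousLinearMap.adjoint Φ ∘L Φ - (1 - R ∘L R) with hA
    have hAR : ∀ x : H, A (R x) = 0 := by
      intro x
      rw [hA, sub_apply, key x, sub_self]
    have hAx : ∀ x : H, A x = 0 := by
      intro x
      apply hinj
      apply ext_inner_right ℂ
      intro y
      have : ⟪R (A x), y⟫_ℂ = ⟪x, A (R y)⟫_ℂ := by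
        rw [hR (A x) y]
        rw [show ⟪A x, R y⟫_ℂ = ⟪x, A (R y)⟫_ℂ from by
          conv_lhs => rw [← hsa.adjoint_eq]
          exact adjoint_inner_left A (R y) x]
      rw [this, hAR y, inner_zero_right, inner_zero_left]
    have : A = 0 := by ext x; exact hAx x
    exact sub_eq_zero.mp this
  refine ⟨main, ?_⟩
  intro lam hlam P
  rw [main]
  have hne : (1 : ℝ) + lam ≠ 0 := by positivity
  have hl : lam / (1 + lam) = 1 - (1 + lam)⁻¹ := by field_simp; ring
  have hval : ∀ u : H, (⟪(1 - R ∘L R) u, u⟫_ℂ).re = ‖u‖ ^ 2 - (⟪(R ∘L R) u, u⟫_ℂ).re := by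
    intro u
    rw [ContinuousLinearMap.sub_apply, inner_sub_left, Complex.sub_re,
      ContinuousLinearMap.one_apply]
    congr 1
    have := inner_self_eq_norm_sq (𝕜 := ℂ) (E := H) u
    simpa using this
  have e1 : (1 - R ∘L R) ∘L P = P - (R ∘L R) ∘L P := by ext u; simp
  have e2 : P ∘L (1 - R ∘L R) = P - P ∘L (R ∘L R) := by ext u; simp
  have hcomm : ((R ∘L R) ∘L P = P ∘L (R ∘L R)) ↔
      ((1 - R ∘L R) ∘L P = P ∘L (1 - R ∘L R)) := by
    rw [e1, e2, sub_right_inj]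
  constructor
  · rintro ⟨h1, h2, h3, h4, h5⟩
    refine ⟨h1, h2, hcomm.mp h3, ?_, ?_⟩
    · intro u hu
      have := h4 u hu
      rw [hval, hl, sub_mul, one_mul]
      linarith
    · intro u hu
      have := h5 u hu
      rw [hval, hl, sub_mul, one_mul]
      linarith
  · rintro ⟨h1, h2, h3, h4, h5⟩
    refine ⟨h1, h2, hcomm.mpr h3, ?_, ?_⟩
    · intro u hu
      have := h4 u hu
      rw [hval, hl, sub_mul, one_mul] at this
      linarith
    · intro u hu
      have := h5 u hu
      rw [hval, hl, sub_mul, one_mul] at this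
      linarith
end
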